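/- Let φ : A → B be a radical-preserving ring homomorphism, i.e. φ(J(A)) ⊆ J(B). Let M be a non-zero finitely generated left A-module with projective cover f : P ↠ M. Then B ⊗_A M = 0 if and only if B ⊗_A P = 0, and if B ⊗_A M ≠ 0 then B ⊗_A f : B ⊗_A P → B ⊗_A M is a projective cover of the B-module B ⊗_A M. -/

import Mathlib

universe u

open Function CategoryTheory

/-! ### Ring-theoretic preliminaries -/

/-- The Jacobson radical of a ring (the intersection of all maximal left ideals). -/
def jac (R : Type u) [Ring R] : Ideal R := Ideal.jacobson (⊥ : Ideal R)

section Modules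

variable (R : Type u) [Ring R] (M : Type u) [AddCommGroup M] [Module R M]

/-- A submodule `N` of `M` is superfluous (small) if `N ⊔ L = M` implies `L = M`. -/
def Superfluous (N : Submodule R M) : Prop :=
  ∀ L : Submodule R M, N ⊔ L = ⊤ → L = ⊤

/-- The submodule `I • p` generated by the products of elements of a left ideal `I`
with elements of a submodule `p`. -/
def idealSMul (I : Ideal R) (p : Submodule R M) : Submodule R M :=
  Submodule.span R {x | ∃ a ∈ I, ∃ m ∈ p, x = a • m}

/-- The powers `J(R)^n • M` of the radical acting on a module. -/
def radPow : ℕ → Submodule R M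
  | 0 => ⊤
  | n + 1 => idealSMul R M (jac R) (radPow n)

/-- The Loewy length of a module: the least `n` with `J(R)^n M = 0` (`⊤` if none exists). -/
noncomputable def loewyLength : ℕ∞ :=
  sInf ((↑) '' {n : ℕ | radPow R M n = ⊥})

/-- A projective cover: a linear surjection from a projective module with superfluous kernel. -/
def IsProjectiveCover {P : Type u} [AddCommGroup P] [Module R P]
    (f : P →ₗ[R] M) : Prop :=
  Module.Projective R P ∧ Function.Surjective f ∧ Superfluous R P (LinearMap.ker f)

/-- A module is indecomposable if it is non-zero and admits no non-trivial
direct sum decomposition. -/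
def IsIndecomposableModule : Prop :=
  Nontrivial M ∧ ∀ N₁ N₂ : Submodule R M, IsCompl N₁ N₂ → N₁ = ⊥ ∨ N₂ = ⊥

/-- A submodule is indecomposable if it is non-zero and is not the direct sum of two
non-zero submodules. -/
def IsIndecomposableSubmodule (N : Submodule R M) : Prop :=
  N ≠ ⊥ ∧ ∀ N₁ N₂ : Submodule R M, N₁ ≤ N → N₂ ≤ N → N₁ ⊓ N₂ = ⊥ → N₁ ⊔ N₂ = N →
    N₁ = ⊥ ∨ N₂ = ⊥

end Modules

section Rings

variable (R : Type u) [Ring R]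

/-- A ring is semilocal if it is semisimple modulo its Jacobson radical. -/
def IsSemilocalRing : Prop :=
  IsSemisimpleModule R (R ⧸ jac R)

/-- A ring is semiperfect if it is semilocal and idempotents lift modulo the radical. -/
def IsSemiperfectRing : Prop :=
  IsSemilocalRing R ∧
    ∀ x : R, x * x - x ∈ jac R → ∃ e : R, IsIdempotentElem e ∧ e - x ∈ jac R

/-- A subset `T` of a ring is left T-nilpotent if every sequence in `T` has a
vanishing initial product `a 0 * a 1 * ⋯ * a n`. -/
def IsLeftTNilpotent {R : Type u} [Ring R] (T : Set R) : Prop :=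
  ∀ a : ℕ → R, (∀ i, a i ∈ T) → ∃ n : ℕ, ((List.range (n + 1)).map a).prod = 0

/-- A ring is left perfect if it is semilocal with left T-nilpotent radical. -/
def IsLeftPerfectRing : Prop :=
  IsSemilocalRing R ∧ IsLeftTNilpotent (jac R : Set R)

/-- `I ^ n = 0`: every product of `n` elements of `I` vanishes. -/
def IdealPowZero (I : Ideal R) (n : ℕ) : Prop :=
  ∀ a : ℕ → R, (∀ i, a i ∈ I) → ((List.range n).map a).prod = 0

/-- A ring is semiprimary if it is semilocal and its Jacobson radical is nilpotent. -/
def IsSemiprimaryRing' : Prop :=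
  IsSemilocalRing R ∧ ∃ n : ℕ, IdealPowZero R (jac R) n

/-- A primitive idempotent: a non-zero idempotent admitting no non-trivial
decomposition into orthogonal idempotents. -/
def IsPrimitiveIdem (e : R) : Prop :=
  IsIdempotentElem e ∧ e ≠ 0 ∧
    ∀ f g : R, IsIdempotentElem f → IsIdempotentElem g → f * g = 0 → g * f = 0 →
      f + g = e → f = 0 ∨ g = 0

/-- A complete set of primitive orthogonal idempotents. -/
def IsCompleteOrthogonalPrimitiveSet {ι : Type u} [Fintype ι] (e : ι → R) : Prop :=
  (∀ i, IsPrimitiveIdem R (e i)) ∧ (∀ i j, i ≠ j → e i * e j = 0) ∧ ∑ i, e i = 1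

/-- A complete set of primitive orthogonal idempotents is basic if the corresponding
indecomposable projective modules `R e i` are pairwise non-isomorphic. -/
def IsBasicSet {ι : Type u} [Fintype ι] (e : ι → R) : Prop :=
  IsCompleteOrthogonalPrimitiveSet R e ∧
    ∀ i j, Nonempty ((Ideal.span {e i}) ≃ₗ[R] (Ideal.span {e j})) → i = j

/-- A ring is basic if it admits a complete set of primitive orthogonal idempotents
that is basic. -/
def IsBasicRing : Prop :=
  ∃ (ι : Type u) (_ : Fintype ι) (e : ι → R), IsBasicSet R e

end Rings

/-! ### Homological dimensions -/

section Dim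

variable (A : Type u) [Ring A]

/-- `projDimLE A n M`: the `A`-module `M` admits a projective resolution of length `≤ n`. -/
def projDimLE : ℕ → ModuleCat.{u} A → Prop
  | 0, M => Projective M
  | n + 1, M => ∃ (K P : ModuleCat.{u} A) (f : K ⟶ P) (g : P ⟶ M),
      Projective P ∧ Function.Injective f ∧ Function.Surjective g ∧
      (∀ x, g (f x) = 0) ∧ (∀ y, g y = 0 → ∃ x, f x = y) ∧ projDimLE n K

/-- The projective dimension of a module, as an extended natural number. -/
noncomputable def projDim (M : ModuleCat.{u} A) : ℕ∞ :=
  sInf ((↑) '' {n : ℕ | projDimLE A n M})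

/-- `injDimLE A n M`: the `A`-module `M` admits an injective coresolution of length `≤ n`. -/
def injDimLE : ℕ → ModuleCat.{u} A → Prop
  | 0, M => Injective M
  | n + 1, M => ∃ (I C : ModuleCat.{u} A) (f : M ⟶ I) (g : I ⟶ C),
      Injective I ∧ Function.Injective f ∧ Function.Surjective g ∧
      (∀ x, g (f x) = 0) ∧ (∀ y, g y = 0 → ∃ x, f x = y) ∧ injDimLE n C

/-- The injective dimension of a module, as an extended natural number. -/
noncomputable def injDim (M : ModuleCat.{u} A) : ℕ∞ :=
  sInf ((↑) '' {n : ℕ | injDimLE A n M})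

/-- The left global dimension of a ring. -/
noncomputable def glDim : ℕ∞ :=
  ⨆ M : ModuleCat.{u} A, projDim A M

/-- The little finitistic dimension: the supremum of the projective dimensions of
finitely generated left modules of finite projective dimension. -/
noncomputable def finDim : ℕ∞ :=
  ⨆ (M : ModuleCat.{u} A) (_ : Module.Finite A M ∧ projDim A M ≠ ⊤), projDim A M

/-- The big finitistic dimension: the supremum of the projective dimensions of
all left modules of finite projective dimension. -/
noncomputable def FinDim : ℕ∞ :=
  ⨆ (M : ModuleCat.{u} A) (_ : projDim A M ≠ ⊤), projDim A M

end Dim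

/-! ### Induction along a ring homomorphism -/

section Tensor

variable {A B : Type u} [Ring A] [Ring B] (φ : A →+* B)

/-- The relations defining `B ⊗_A M` inside `B ⊗_ℤ M`. -/
def TensorRel (M : Type u) [AddCommGroup M] [Module A M] :
    Submodule B (TensorProduct ℤ B M) :=
  Submodule.span B
    {x | ∃ (b : B) (a : A) (m : M), x = (b * φ a) ⊗ₜ[ℤ] m - b ⊗ₜ[ℤ] (a • m)}

/-- The induced module `B ⊗_A M` along a ring homomorphism `φ : A →+* B`, realized
as the quotient of `B ⊗_ℤ M` by the bilinearity relations for the `A`-actions. -/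
def TensorB (M : Type u) [AddCommGroup M] [Module A M] : Type u :=
  TensorProduct ℤ B M ⧸ TensorRel φ M

noncomputable instance (M : Type u) [AddCommGroup M] [Module A M] :
    AddCommGroup (TensorB φ M) :=
  inferInstanceAs (AddCommGroup (TensorProduct ℤ B M ⧸ TensorRel φ M))

noncomputable instance (M : Type u) [AddCommGroup M] [Module A M] :
    Module B (TensorB φ M) :=
  inferInstanceAs (Module B (TensorProduct ℤ B M ⧸ TensorRel φ M))

/-- The map induced on `B ⊗_ℤ ·` by an `A`-linear map `f`. -/
noncomputable def tmapAux {M N : Type u} [AddCommGroup M] [Module A M]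
    [AddCommGroup N] [Module A N] (f : M →ₗ[A] N) :
    TensorProduct ℤ B M →ₗ[B] TensorProduct ℤ B N :=
  TensorProduct.AlgebraTensorModule.map (LinearMap.id : B →ₗ[B] B)
    f.toAddMonoidHom.toIntLinearMap

/-- The induction functor on morphisms: `B ⊗_A f : B ⊗_A M →ₗ[B] B ⊗_A N`. -/
noncomputable def tmap {M N : Type u} [AddCommGroup M] [Module A M]
    [AddCommGroup N] [Module A N] (f : M →ₗ[A] N) :
    TensorB φ M →ₗ[B] TensorB φ N :=
  Submodule.mapQ (TensorRel φ M) (TensorRel φ N) (tmapAux (B := B) f) (by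
    rw [TensorRel, Submodule.span_le]
    rintro x ⟨b, a, m, rfl⟩
    have : (tmapAux (B := B) f) ((b * φ a) ⊗ₜ[ℤ] m - b ⊗ₜ[ℤ] (a • m)) =
        (b * φ a) ⊗ₜ[ℤ] (f m) - b ⊗ₜ[ℤ] (a • f m) := by
      simp [tmapAux, map_smul]
    rw [SetLike.mem_coe, Submodule.mem_comap, this]
    exact Submodule.subset_span ⟨b, a, f m, rfl⟩)

/-- `torVanish φ n M` encodes the vanishing `Tor_{n+1}^A(B, M) = 0`, via dimension
shifting through short exact sequences `0 → K → P → M → 0` with `P` projective. -/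
def torVanish : ℕ → ModuleCat.{u} A → Prop
  | 0, M => ∀ (K P : ModuleCat.{u} A) (f : K ⟶ P) (g : P ⟶ M),
      Projective P → Function.Injective f → Function.Surjective g →
      (∀ x, g (f x) = 0) → (∀ y, g y = 0 → ∃ x, f x = y) →
      Function.Injective (tmap φ (f.hom : ↥K →ₗ[A] ↥P))
  | n + 1, M => ∀ (K P : ModuleCat.{u} A) (f : K ⟶ P) (g : P ⟶ M),
      Projective P → Function.Injective f → Function.Surjective g →
      (∀ x, g (f x) = 0) → (∀ y, g y = 0 → ∃ x, f x = y) →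
      torVanish n K

/-- The flat dimension of `B` as a right `A`-module along `φ`, characterized by Tor
vanishing: `flatdim B_A ≤ d` iff `Tor_n^A(B, M) = 0` for all `n > d` and all left
`A`-modules `M`. -/
noncomputable def flatDimR : ℕ∞ :=
  sInf ((↑) '' {d : ℕ | ∀ (M : ModuleCat.{u} A) (n : ℕ), d ≤ n → torVanish φ n M})

/-- `B` as a right `A`-module (i.e. a left `Aᵐᵒᵖ`-module) via `φ`. -/
noncomputable def rightModule : Module Aᵐᵒᵖ B :=
  Module.compHom B (RingHom.op φ)

/-- The projective dimension of `B` as a right `A`-module via `φ`. -/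
noncomputable def pdBA : ℕ∞ :=
  letI := rightModule φ
  projDim Aᵐᵒᵖ (ModuleCat.of Aᵐᵒᵖ B)

end Tensor

/-! Induction is right exact, so the kernel of `B ⊗_A f` is spanned by the image of `ker f`.
A superfluous submodule of a projective module lies in `J(A) P`, and a radical-preserving `φ`
carries `J(A) P` into `J(B) (B ⊗_A P)`. As `P` is finitely generated (it covers `M`), so is
`B ⊗_A P`, and by Nakayama's lemma every submodule of `J(B) (B ⊗_A P)` is superfluous.
Finally, a surjection with superfluous kernel has zero source exactly when it has zero target. -/

open Submodule

lemma jac_eq_jacobson (R : Type u) [Ring R] : jac R = Ring.jacobson R :=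
  Ideal.jacobson_bot

section Superfluous

variable {R : Type u} [Ring R] {M P : Type u} [AddCommGroup M] [Module R M]
  [AddCommGroup P] [Module R P]

lemma Superfluous.le_jacobson {K : Submodule R M} (hK : Superfluous R M K) :
    K ≤ Module.jacobson R M :=
  le_sInf fun m hm ↦ by
    by_contra hKm
    have hmK : m ⊔ K = ⊤ := hm.2 _ (left_lt_sup.mpr hKm)
    exact hm.1 (hK m (sup_comm K m ▸ hmK))

lemma Module.jacobson_le_smul_top_of_projective [Module.Projective R P] :
    Module.jacobson R P ≤ Ring.jacobson R • ⊤ := by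
  intro x hx
  obtain ⟨s, hs⟩ := Module.projective_def.mp ‹Module.Projective R P›
  rw [← hs x, Finsupp.linearCombination_apply]
  refine sum_mem fun p _ ↦ smul_mem_smul ?_ mem_top
  exact Module.le_comap_jacobson ((Finsupp.lapply p).comp s) hx

lemma superfluous_of_le_jacobson_smul_top [Module.Finite R M] {K : Submodule R M}
    (hK : K ≤ Ring.jacobson R • ⊤) : Superfluous R M K := by
  intro L hKL
  have htop : (⊤ : Submodule R (M ⧸ L)) ≤ Ring.jacobson R • ⊤ :=
    calc ⊤ = K.map L.mkQ := ((map_mkQ_eq_top L K).mpr (sup_comm K L ▸ hKL)).symm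
      _ ≤ (Ring.jacobson R • ⊤ : Submodule R M).map L.mkQ := map_mono hK
      _ = Ring.jacobson R • ⊤ := by rw [map_smul'', Submodule.map_top, range_mkQ]
  have hbot := Module.Finite.fg_top.eq_bot_of_le_jacobson_smul htop
  rwa [eq_comm, subsingleton_iff_bot_eq_top, Submodule.subsingleton_iff,
    Submodule.Quotient.subsingleton_iff] at hbot

lemma Superfluous.finite_of_surjective [Module.Finite R M] {f : P →ₗ[R] M}
    (hf : Function.Surjective f) (hK : Superfluous R P (LinearMap.ker f)) :
    Module.Finite R P := by
  obtain ⟨S, hS⟩ := Module.Finite.fg_top (R := R) (M := M)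
  let L := span R (Function.surjInv hf '' S)
  have hL : L.map f = ⊤ := by
    rw [map_span, ← Set.image_comp, Function.comp_surjInv hf, Set.image_id, hS]
  have hKL : LinearMap.ker f ⊔ L = ⊤ := by
    rw [sup_comm, ← comap_map_eq, hL, comap_top]
  exact ⟨hK L hKL ▸ fg_span (S.finite_toSet.image _)⟩

lemma Superfluous.subsingleton_iff_of_surjective {f : P →ₗ[R] M}
    (hf : Function.Surjective f) (hK : Superfluous R P (LinearMap.ker f)) :
    Subsingleton M ↔ Subsingleton P := by
  refine ⟨fun _ ↦ ?_, fun _ ↦ hf.subsingleton⟩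
  have hbot : (⊥ : Submodule R P) = ⊤ :=
    hK ⊥ (by rw [sup_bot_eq, eq_top_iff]; exact fun x _ ↦ Subsingleton.elim (f x) 0)
  exact (Submodule.subsingleton_iff R).mp (subsingleton_iff_bot_eq_top.mp hbot)

end Superfluous

namespace TensorB

open TensorProduct

variable {A B : Type u} [Ring A] [Ring B] (φ : A →+* B)
  {M N : Type u} [AddCommGroup M] [Module A M] [AddCommGroup N] [Module A N]

noncomputable def mk : B ⊗[ℤ] M →ₗ[B] TensorB φ M := (TensorRel φ M).mkQ

lemma mk_rel (b : B) (a : A) (m : M) : mk φ ((b * φ a) ⊗ₜ[ℤ] m) = mk φ (b ⊗ₜ[ℤ] (a • m)) :=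
  (Submodule.Quotient.eq _).mpr (subset_span ⟨b, a, m, rfl⟩)

lemma mk_surjective : Function.Surjective (mk φ : B ⊗[ℤ] M → TensorB φ M) :=
  (TensorRel φ M).mkQ_surjective

noncomputable def of : M →ₛₗ[φ] TensorB φ M where
  toFun m := mk φ (1 ⊗ₜ[ℤ] m)
  map_add' m m' := by rw [tmul_add, map_add]
  map_smul' a m := by
    rw [← mk_rel, one_mul, ← map_smul, smul_tmul', smul_eq_mul, mul_one]

lemma of_apply (m : M) : of φ m = mk φ (1 ⊗ₜ[ℤ] m) := rfl

lemma mk_tmul (b : B) (m : M) : mk φ (b ⊗ₜ[ℤ] m) = b • of φ m := by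
  rw [of_apply, ← map_smul, smul_tmul', smul_eq_mul, mul_one]

lemma span_range_of : span B (Set.range (of φ : M → TensorB φ M)) = ⊤ := by
  refine eq_top_iff'.mpr fun x ↦ ?_
  obtain ⟨t, rfl⟩ := mk_surjective φ x
  induction t using TensorProduct.induction_on with
  | zero => exact zero_mem _
  | tmul b m => exact mk_tmul φ b m ▸ smul_mem _ _ (subset_span ⟨m, rfl⟩)
  | add x y hx hy => exact map_add (mk φ) x y ▸ add_mem hx hy

lemma hom_ext {X : Type u} [AddCommGroup X] [Module B X] {g h : TensorB φ M →ₗ[B] X}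
    (H : ∀ m, g (of φ m) = h (of φ m)) : g = h :=
  LinearMap.ext_on_range (span_range_of φ) H

variable {φ} in
noncomputable def lift {X : Type u} [AddCommGroup X] [Module B X] (g : M →ₛₗ[φ] X) :
    TensorB φ M →ₗ[B] X :=
  (TensorRel φ M).liftQ
    (AlgebraTensorModule.lift (LinearMap.toSpanSingleton B _ g.toAddMonoidHom.toIntLinearMap))
    (span_le.mpr <| by
      rintro _ ⟨b, a, m, rfl⟩
      simp [mul_smul])

@[simp]
lemma lift_of {X : Type u} [AddCommGroup X] [Module B X] (g : M →ₛₗ[φ] X) (m : M) :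
    lift g (of φ m) = g m := by
  rw [lift, of_apply, mk]
  erw [liftQ_apply]
  simp

@[simp]
lemma tmap_of (f : M →ₗ[A] N) (m : M) : tmap φ f (of φ m) = of φ (f m) :=
  rfl

lemma tmap_surjective {f : M →ₗ[A] N} (hf : Function.Surjective f) :
    Function.Surjective (tmap φ f) := by
  rw [← LinearMap.range_eq_top, eq_top_iff, ← span_range_of, span_le]
  rintro _ ⟨n, rfl⟩
  obtain ⟨m, rfl⟩ := hf n
  exact ⟨of φ m, tmap_of φ f m⟩

lemma span_image_of_eq_top {S : Set M} (hS : span A S = ⊤) :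
    span B (of φ '' S) = ⊤ := by
  rw [eq_top_iff, ← span_range_of, span_le]
  rintro _ ⟨m, rfl⟩
  have hle : span A S ≤ (span B (of φ '' S)).comap (of φ) :=
    span_le.mpr fun s hs ↦ subset_span ⟨s, hs, rfl⟩
  exact hle (hS ▸ mem_top)

instance finite [Module.Finite A M] : Module.Finite B (TensorB φ M) :=
  let ⟨S, hS⟩ := Module.Finite.fg_top (R := A) (M := M)
  ⟨span_image_of_eq_top φ hS ▸ fg_span (S.finite_toSet.image _)⟩

lemma projective [Module.Projective A M] : Module.Projective B (TensorB φ M) := by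
  -- Restricting scalars along `φ` makes the `A`-linear lifting property of `M` available.
  let _ : Module A (TensorB φ M →₀ B) := Module.compHom _ φ
  let _ : Module A (TensorB φ M) := Module.compHom _ φ
  let π := Finsupp.linearCombination B (id : TensorB φ M → TensorB φ M)
  let πA : (TensorB φ M →₀ B) →ₗ[A] TensorB φ M :=
    { π.toAddMonoidHom with map_smul' := fun a x ↦ π.map_smul (φ a) x }
  let ofA : M →ₗ[A] TensorB φ M := { of φ with map_smul' := (of φ).map_smulₛₗ }
  have hπ : Function.Surjective πA := fun y ↦ ⟨Finsupp.single y 1, by simp [πA, π]⟩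
  obtain ⟨t, ht⟩ := Module.projective_lifting_property πA ofA hπ
  let tB : M →ₛₗ[φ] (TensorB φ M →₀ B) := { t with map_smul' := t.map_smul }
  refine Module.projective_def'.mpr ⟨lift tB, hom_ext φ fun m ↦ ?_⟩
  rw [LinearMap.comp_apply, lift_of]
  exact LinearMap.congr_fun ht m

lemma jacobson_smul_top_le_comap (hφ : ∀ a ∈ Ring.jacobson A, φ a ∈ Ring.jacobson B) :
    Ring.jacobson A • (⊤ : Submodule A M) ≤
      (Ring.jacobson B • ⊤ : Submodule B (TensorB φ M)).comap (of φ) :=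
  smul_le.mpr fun a ha m _ ↦ by
    rw [mem_comap, map_smulₛₗ]
    exact smul_mem_smul (hφ a ha) mem_top

lemma ker_tmap_le {f : M →ₗ[A] N} (hf : Function.Surjective f) :
    LinearMap.ker (tmap φ f) ≤ span B (of φ '' (LinearMap.ker f : Set M)) := by
  set T := span B (of φ '' (LinearMap.ker f : Set M))
  have hT : LinearMap.ker f ≤ LinearMap.ker (T.mkQ ∘ₛₗ of φ) := fun k hk ↦
    (Quotient.mk_eq_zero T).mpr (subset_span ⟨k, hk, rfl⟩)
  let g : N →ₛₗ[φ] TensorB φ M ⧸ T :=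
    (LinearMap.ker f).liftQ _ hT ∘ₛₗ (f.quotKerEquivOfSurjective hf).symm.toLinearMap
  have hg : lift g ∘ₗ tmap φ f = T.mkQ := hom_ext φ fun m ↦ by simp [g]
  intro x hx
  rw [← Quotient.mk_eq_zero, ← mkQ_apply, ← hg, LinearMap.comp_apply, hx, map_zero]

end TensorB

theorem IsProjectiveCover.tmap {A B : Type u} [Ring A] [Ring B] {φ : A →+* B}
    (hφ : ∀ a ∈ Ring.jacobson A, φ a ∈ Ring.jacobson B) {M P : Type u} [AddCommGroup M]
    [Module A M] [AddCommGroup P] [Module A P] [Module.Finite A M] {f : P →ₗ[A] M}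
    (hf : IsProjectiveCover A M f) : IsProjectiveCover B (TensorB φ M) (tmap φ f) := by
  obtain ⟨hP, hsurj, hker⟩ := hf
  have : Module.Finite A P := hker.finite_of_surjective hsurj
  refine ⟨TensorB.projective φ, TensorB.tmap_surjective φ hsurj,
    superfluous_of_le_jacobson_smul_top <| (TensorB.ker_tmap_le φ hsurj).trans <| span_le.mpr ?_⟩
  rintro _ ⟨k, hk, rfl⟩
  exact TensorB.jacobson_smul_top_le_comap φ hφ
    (Module.jacobson_le_smul_top_of_projective (hker.le_jacobson hk))

theorem statement_6_general {A B : Type u} [Ring A] [Ring B] (φ : A →+* B)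
    (hrad : ∀ a ∈ jac A, φ a ∈ jac B)
    (M P : Type u) [AddCommGroup M] [Module A M] [AddCommGroup P] [Module A P]
    [Module.Finite A M]
    (f : P →ₗ[A] M) (hf : IsProjectiveCover A M f) :
    ((∀ x : TensorB φ M, x = 0) ↔ (∀ x : TensorB φ P, x = 0)) ∧
      ((∃ x : TensorB φ M, x ≠ 0) →
        IsProjectiveCover B (TensorB φ M) (tmap φ f)) := by
  rw [jac_eq_jacobson, jac_eq_jacobson] at hrad
  have hcover := hf.tmap hrad
  refine ⟨?_, fun _ ↦ hcover⟩
  rw [← subsingleton_iff_forall_eq, ← subsingleton_iff_forall_eq]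
  exact hcover.2.2.subsingleton_iff_of_surjective hcover.2.1

/-- Induction along a radical-preserving homomorphism preserves
projective covers of finitely generated modules. -/
theorem statement_6 {A B : Type u} [Ring A] [Ring B] (φ : A →+* B)
    (hrad : ∀ a ∈ jac A, φ a ∈ jac B)
    (M P : Type u) [AddCommGroup M] [Module A M] [AddCommGroup P] [Module A P]
    [Module.Finite A M] (hM : ∃ m : M, m ≠ 0)
    (f : P →ₗ[A] M) (hf : IsProjectiveCover A M f) :
    ((∀ x : TensorB φ M, x = 0) ↔ (∀ x : TensorB φ P, x = 0)) ∧
      ((∃ x : TensorB φ M, x ≠ 0) →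
        IsProjectiveCover B (TensorB φ M) (tmap φ f)) :=
  statement_6_general φ hrad M P f hf
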